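/- arXiv:1609.07183 — 2 statements merged into one kernel-verified Lean document; each statement's English description precedes it below -/
import Mathlib

section
/- Let q be a prime power, k > 1, Δ = (q^k − 1)/(q − 1), γ a primitive element of F_{q^k}, and let e₁, e₂ be integers with gcd(q − 1, k·e₁ − e₂) = 1 and gcd(Δ, e₂) = 1. For a, b ∈ F_{q^k} let N(a, b) = #{ i : 0 ≤ i < q^k − 1, Tr(a·γ^{Δe₁·i} + b·γ^{e₂·i}) ≠ 0 } (the Hamming weight of the corresponding codeword). Then: N(a, b) = 0 if a = 0 and b = 0; N(a, b) = q^k − 1 if Tr(a) ≠ 0 and b = 0; N(a, b) = q^{k−1}(q − 1) if Tr(a) = 0 and b ≠ 0; and N(a, b) = q^{k−1}(q − 1) − 1 if Tr(a) ≠ 0 and b ≠ 0. -/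
open Finset Polynomial

private lemma aux_descent {F E : Type*} [Field F] [Fintype F] [Field E] [Fintype E]
    [Algebra F E] (y : E) (hy : y ^ (Fintype.card F) = y) :
    ∃ c : F, algebraMap F E c = y := by
  classical
  set q := Fintype.card F with hq0
  have hq : 1 < q := Fintype.one_lt_card
  have hinj : Function.Injective (algebraMap F E) := (algebraMap F E).injective
  set I : Finset E := Finset.univ.image (algebraMap F E) with hI
  set S : Finset E := Finset.univ.filter (fun y : E => y ^ q = y) with hS
  have hIS : I ⊆ S := by
    intro z hz
    simp only [hI, Finset.mem_image] at hz
    obtain ⟨c, _, rfl⟩ := hz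
    simp only [hS, Finset.mem_filter, Finset.mem_univ, true_and]
    rw [← map_pow, FiniteField.pow_card]
  have hScard : S.card ≤ q := by
    have h0 : (X ^ q - X : E[X]) ≠ 0 := FiniteField.X_pow_card_sub_X_ne_zero E hq
    have hsub : S ⊆ (X ^ q - X : E[X]).roots.toFinset := by
      intro z hz
      simp only [hS, Finset.mem_filter, Finset.mem_univ, true_and] at hz
      simp only [Multiset.mem_toFinset, mem_roots h0, IsRoot.def, eval_sub, eval_pow, eval_X,
        sub_eq_zero, hz]
    calc S.card ≤ (X ^ q - X : E[X]).roots.toFinset.card := Finset.card_le_card hsub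
      _ ≤ Multiset.card (X ^ q - X : E[X]).roots := Multiset.toFinset_card_le _
      _ ≤ (X ^ q - X : E[X]).natDegree := Polynomial.card_roots' _
      _ = q := FiniteField.X_pow_card_sub_X_natDegree_eq E hq
  have hIcard : I.card = q := by
    rw [hI, Finset.card_image_of_injective _ hinj, Finset.card_univ]
  have : I = S := Finset.eq_of_subset_of_card_le hIS (by rw [hIcard]; exact hScard)
  have hyS : y ∈ S := by simp [hS, hy]
  rw [← this] at hyS
  simp only [hI, Finset.mem_image] at hyS
  obtain ⟨c, _, hc⟩ := hyS
  exact ⟨c, hc⟩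

private lemma aux_zpow_bij {G : Type*} [CommGroup G] [Finite G] (e : ℤ)
    (h : Int.gcd e (Nat.card G) = 1) : Function.Bijective (fun g : G => g ^ e) := by
  rw [Finite.injective_iff_bijective.symm]
  intro x y hxy
  simp only at hxy
  have hz : (x * y⁻¹) ^ e = 1 := by
    rw [mul_zpow, hxy, inv_zpow, mul_inv_cancel]
  have h1 : (orderOf (x * y⁻¹) : ℤ) ∣ e := orderOf_dvd_iff_zpow_eq_one.2 hz
  have h2 : orderOf (x * y⁻¹) ∣ Nat.card G := orderOf_dvd_natCard _
  have h3 : orderOf (x * y⁻¹) ∣ e.natAbs := by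
    rw [Int.natCast_dvd] at h1
    exact h1
  have : orderOf (x * y⁻¹) ∣ Int.gcd e (Nat.card G) := Nat.dvd_gcd h3 (by simpa using h2)
  rw [h] at this
  have := Nat.eq_one_of_dvd_one this -- orderOf = 1
  have : x * y⁻¹ = 1 := orderOf_eq_one_iff.mp this
  rwa [mul_inv_eq_one] at this

private lemma aux_fiber_card {G H : Type*} [CommGroup G] [Fintype G] [CommGroup H] [Fintype H]
    (ι : H →* G) (hι : Function.Injective ι) (x₀ : G) (p : G → Prop) [DecidablePred p]
    [DecidableEq (G ⧸ ι.range)] :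
    (univ.filter (fun x : G =>
        (QuotientGroup.mk x : G ⧸ ι.range) = QuotientGroup.mk x₀ ∧ p x)).card
      = (univ.filter (fun c : H => p (ι c * x₀))).card := by
  classical
  symm
  apply Finset.card_bij (fun c _ => ι c * x₀)
  · intro c hc
    simp only [mem_filter, mem_univ, true_and] at hc ⊢
    refine ⟨?_, hc⟩
    rw [QuotientGroup.eq]
    refine ⟨(c)⁻¹, ?_⟩
    rw [map_inv, mul_inv_rev, mul_comm x₀⁻¹ (ι c)⁻¹, mul_assoc, inv_mul_cancel, mul_one]
  · intro c₁ h₁ c₂ h₂ h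
    exact hι (mul_right_cancel h)
  · intro x hx
    simp only [mem_filter, mem_univ, true_and] at hx
    obtain ⟨hq, hp⟩ := hx
    rw [QuotientGroup.eq] at hq
    obtain ⟨c, hc⟩ := hq
    have hx' : ι c⁻¹ * x₀ = x := by
      rw [map_inv, hc, mul_inv_rev, inv_inv, mul_assoc, mul_comm x x₀, ← mul_assoc, inv_mul_cancel, one_mul]
    refine ⟨c⁻¹, ?_, hx'⟩
    simp only [mem_filter, mem_univ, true_and]
    rwa [hx']

private lemma aux_ker_card {q k : ℕ}
    {F E : Type*} [Field F] [Fintype F] [Field E] [Fintype E] [Algebra F E]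
    (hcard : Fintype.card F = q) (hE : Fintype.card E = q ^ k)
    (b : E) (hb : b ≠ 0) [DecidableEq E]
    [DecidablePred fun x : Eˣ => Algebra.trace F E (b * (x : E)) = 0] :
    (univ.filter (fun x : Eˣ => Algebra.trace F E (b * (x : E)) = 0)).card
      = q ^ (k - 1) - 1 := by
  classical
  have hq : 1 < q := hcard ▸ Fintype.one_lt_card
  have hfr : Module.finrank F E = k := by
    have h := Module.card_eq_pow_finrank (K := F) (V := E)
    rw [hcard, hE] at h
    exact (Nat.pow_right_injective hq h.symm)
  set f : E →ₗ[F] F := (Algebra.trace F E).comp (LinearMap.mulLeft F b) with hf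
  have hfapp : ∀ y : E, f y = Algebra.trace F E (b * y) := by
    intro y; simp [hf]
  have hsurj : Function.Surjective f := by
    intro z
    obtain ⟨y, hy⟩ := Algebra.trace_surjective F E z
    exact ⟨b⁻¹ * y, by rw [hfapp, ← mul_assoc, mul_inv_cancel₀ hb, one_mul, hy]⟩
  have hrange : Module.finrank F (LinearMap.range f) = 1 := by
    rw [LinearMap.range_eq_top.2 hsurj, finrank_top, Module.finrank_self]
  have hrn := LinearMap.finrank_range_add_finrank_ker f
  rw [hrange, hfr] at hrn
  have hker : Module.finrank F (LinearMap.ker f) = k - 1 := by omega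
  haveI : Fintype (LinearMap.ker f) := Fintype.ofFinite _
  have hkcard : Fintype.card (LinearMap.ker f) = q ^ (k - 1) := by
    rw [Module.card_eq_pow_finrank (K := F), hker, hcard]
  have h1 : (univ.filter (fun y : E => Algebra.trace F E (b * y) = 0)).card = q ^ (k - 1) := by
    calc (univ.filter (fun y : E => Algebra.trace F E (b * y) = 0)).card
        = Fintype.card {y : E // Algebra.trace F E (b * y) = 0} := (Fintype.card_subtype _).symm
      _ = Fintype.card (LinearMap.ker f) := Fintype.card_congr
          (Equiv.subtypeEquivRight (fun y => by rw [LinearMap.mem_ker, hfapp]))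
      _ = q ^ (k - 1) := hkcard
  have h2 : (univ.filter (fun y : E => Algebra.trace F E (b * y) = 0 ∧ y ≠ 0)).card
      = q ^ (k - 1) - 1 := by
    have he : (univ.filter (fun y : E => Algebra.trace F E (b * y) = 0 ∧ y ≠ 0))
        = (univ.filter (fun y : E => Algebra.trace F E (b * y) = 0)).erase 0 := by
      ext y
      simp only [mem_filter, mem_univ, true_and, Finset.mem_erase]
      tauto
    rw [he, Finset.card_erase_of_mem, h1]
    simp
  rw [← h2]
  refine Finset.card_bij (fun (x : Eˣ) _ => (x : E)) ?_ ?_ ?_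
  · intro x hx
    simp only [mem_filter, mem_univ, true_and] at hx ⊢
    exact ⟨hx, Units.ne_zero x⟩
  · intro x₁ _ x₂ _ h
    exact Units.ext h
  · intro y hy
    simp only [mem_filter, mem_univ, true_and] at hy
    refine ⟨Units.mk0 y hy.2, ?_, rfl⟩
    simp only [mem_filter, mem_univ, true_and, Units.val_mk0]
    exact hy.1

private lemma aux_sq_dvd (x : ℤ) (k : ℕ) : x ^ 2 ∣ (x + 1) ^ k - (1 + k * x) := by
  induction k with
  | zero => simp
  | succ n ih =>
    have h : (x + 1) ^ (n + 1) - (1 + ((n + 1 : ℕ) : ℤ) * x)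
        = (x + 1) * ((x + 1) ^ n - (1 + n * x)) + n * x ^ 2 := by push_cast; ring
    rw [h]
    exact dvd_add (Dvd.dvd.mul_left ih _) (Dvd.dvd.mul_left dvd_rfl _)

/-- The Hamming weights `N(a, b)` of the trace codewords of the cyclic code
`C_{(Δe₁, e₂)}`, in the four cases (proof of Part (B) of Theorem 1 of the paper). -/
theorem codeword_weights
    (q k : ℕ) (hk : 1 < k)
    (F E : Type*) [Field F] [Fintype F] [Field E] [Fintype E] [Algebra F E]
    (hcard : Fintype.card F = q) (hE : Fintype.card E = q ^ k)
    (γ : Eˣ) (hγ : ∀ x : Eˣ, x ∈ Subgroup.zpowers γ)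
    (Δ e₁ e₂ : ℤ) (hΔ : Δ * ((q : ℤ) - 1) = (q : ℤ) ^ k - 1)
    (hgcd : Int.gcd ((q : ℤ) - 1) ((k : ℤ) * e₁ - e₂) = 1)
    (he₂ : Int.gcd Δ e₂ = 1)
    (a b : E)
    (N : ℕ)
    (hN : N = {i : ℕ | i < q ^ k - 1 ∧
      Algebra.trace F E (a * ((γ ^ (Δ * e₁ * (i : ℤ)) : Eˣ) : E)
        + b * ((γ ^ (e₂ * (i : ℤ)) : Eˣ) : E)) ≠ 0}.ncard) :
    (a = 0 ∧ b = 0 → N = 0) ∧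
    (Algebra.trace F E a ≠ 0 ∧ b = 0 → N = q ^ k - 1) ∧
    (Algebra.trace F E a = 0 ∧ b ≠ 0 → N = q ^ (k - 1) * (q - 1)) ∧
    (Algebra.trace F E a ≠ 0 ∧ b ≠ 0 → N = q ^ (k - 1) * (q - 1) - 1) := by
  classical
  have hq : 1 < q := hcard ▸ Fintype.one_lt_card
  have hqk : 1 < q ^ k := Nat.one_lt_pow (by omega) hq
  have hn : Fintype.card Eˣ = q ^ k - 1 := by rw [Fintype.card_units, hE]
  have horder : orderOf γ = q ^ k - 1 := by
    rw [orderOf_eq_card_of_forall_mem_zpowers hγ, Nat.card_eq_fintype_card, hn]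
  have hcast1 : ((q : ℤ) - 1) = ((q - 1 : ℕ) : ℤ) := by
    have := hq.le; push_cast [Nat.cast_sub this]; ring
  have hcastk : ((q : ℤ) ^ k - 1) = ((q ^ k - 1 : ℕ) : ℤ) := by
    have := hqk.le; push_cast [Nat.cast_sub this]; ring
  have hcardF : Fintype.card Fˣ = q - 1 := by rw [Fintype.card_units, hcard]
  set ι : Fˣ →* Eˣ := Units.map (algebraMap F E).toMonoidHom with hιdef
  have hιval : ∀ c : Fˣ, ((ι c : Eˣ) : E) = algebraMap F E (c : F) := by
    intro c; rfl
  have hιinj : Function.Injective ι := by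
    intro c c' h
    have := congrArg (fun u : Eˣ => (u : E)) h
    simp only [hιval] at this
    exact Units.ext ((algebraMap F E).injective this)
  set t := Algebra.trace F E a with htdef
  set val : Eˣ → F := fun x =>
    Algebra.trace F E (a * ((x ^ (Δ * e₁) : Eˣ) : E) + b * ((x ^ e₂ : Eˣ) : E)) with hvaldef
  -- Step A : N equals the number of units where `val` is nonzero
  have hNT : N = (Finset.univ.filter (fun x : Eˣ => val x ≠ 0)).card := by
    have hPiff : ∀ i : ℕ,
        (Algebra.trace F E (a * ((γ ^ (Δ * e₁ * (i : ℤ)) : Eˣ) : E)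
          + b * ((γ ^ (e₂ * (i : ℤ)) : Eˣ) : E)) ≠ 0) ↔ val (γ ^ i) ≠ 0 := by
      intro i
      have h1 : (γ ^ (Δ * e₁ * (i : ℤ)) : Eˣ) = (γ ^ i) ^ (Δ * e₁) := by
        rw [← zpow_natCast γ i, ← zpow_mul, mul_comm]
      have h2 : (γ ^ (e₂ * (i : ℤ)) : Eˣ) = (γ ^ i) ^ e₂ := by
        rw [← zpow_natCast γ i, ← zpow_mul, mul_comm]
      rw [hvaldef]
      simp only [h1, h2]
    have hseteq : {i : ℕ | i < q ^ k - 1 ∧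
        Algebra.trace F E (a * ((γ ^ (Δ * e₁ * (i : ℤ)) : Eˣ) : E)
          + b * ((γ ^ (e₂ * (i : ℤ)) : Eˣ) : E)) ≠ 0}
        = ↑((Finset.range (q ^ k - 1)).filter (fun i => val (γ ^ i) ≠ 0)) := by
      ext i
      simp only [Set.mem_setOf_eq, Finset.coe_filter, Finset.mem_range, hPiff i]
    rw [hN, hseteq, Set.ncard_coe_finset]
    refine Finset.card_bij (fun i _ => γ ^ i) ?_ ?_ ?_
    · intro i hi
      simp only [Finset.mem_filter, Finset.mem_range, Finset.mem_univ, true_and] at hi ⊢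
      exact hi.2
    · intro i hi j hj hij
      simp only [Finset.mem_filter, Finset.mem_range] at hi hj
      exact pow_injOn_Iio_orderOf (Set.mem_Iio.2 (by rw [horder]; exact hi.1))
        (Set.mem_Iio.2 (by rw [horder]; exact hj.1)) hij
    · intro x hx
      simp only [Finset.mem_filter, Finset.mem_univ, true_and] at hx
      obtain ⟨m, hm⟩ := Submonoid.mem_powers_iff x γ |>.mp
        ((isOfFinOrder_of_finite γ).mem_powers_iff_mem_zpowers.mpr (hγ x))
      have hmod : γ ^ (m % (q ^ k - 1)) = x := by
        rw [← horder, pow_mod_orderOf, hm]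
      refine ⟨m % (q ^ k - 1), ?_, hmod⟩
      simp only [Finset.mem_filter, Finset.mem_range]
      exact ⟨Nat.mod_lt _ (by omega), by rw [hmod]; exact hx⟩
  -- `c ^ (q-1) = 1` for `c : Fˣ`
  have hFpow : ∀ c : Fˣ, c ^ ((q : ℤ) - 1) = 1 := by
    intro c
    rw [hcast1, zpow_natCast, ← hcardF, pow_card_eq_one]
  -- `(q-1) ∣ Δ - k`
  obtain ⟨d, hd⟩ : ((q : ℤ) - 1) ∣ (Δ - k) := by
    have h2 := aux_sq_dvd ((q : ℤ) - 1) k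
    have heq : ((q : ℤ) - 1 + 1) ^ k - (1 + k * ((q : ℤ) - 1)) = (Δ - k) * ((q : ℤ) - 1) := by
      rw [sub_add_cancel]
      linear_combination -hΔ
    rw [heq, pow_two] at h2
    have hne : ((q : ℤ) - 1) ≠ 0 := by
      have : (1 : ℤ) < (q : ℤ) := by exact_mod_cast hq
      omega
    exact (mul_dvd_mul_iff_right hne).mp h2
  -- descent : `x ^ (Δ * e₁)` comes from `Fˣ`
  have hdesc : ∀ x : Eˣ, ∃ c₀ : Fˣ, ι c₀ = x ^ (Δ * e₁) := by
    intro x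
    have hx1 : x ^ ((q ^ k - 1 : ℕ) : ℤ) = 1 := by
      rw [zpow_natCast, ← hn, pow_card_eq_one]
    have hpow : (x ^ (Δ * e₁)) ^ ((q : ℤ) - 1) = 1 := by
      rw [← zpow_mul]
      have hexp : Δ * e₁ * ((q : ℤ) - 1) = ((q ^ k - 1 : ℕ) : ℤ) * e₁ := by
        rw [← hcastk, ← hΔ]; ring
      rw [hexp, zpow_mul, hx1, one_zpow]
    set z : Eˣ := x ^ (Δ * e₁) with hz
    have hzE : (z : E) ^ q = (z : E) := by
      have h1 : (z : E) ^ (q - 1) = 1 := by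
        have h := congrArg (fun u : Eˣ => (u : E)) hpow
        simp only [Units.val_zpow_eq_zpow_val, Units.val_one] at h
        rw [hcast1, zpow_natCast] at h
        exact h
      calc (z : E) ^ q = (z : E) ^ (q - 1) * (z : E) := by
            rw [← pow_succ]; congr 1; omega
        _ = (z : E) := by rw [h1, one_mul]
    obtain ⟨c, hc⟩ := aux_descent (z : E) (by rw [hcard]; exact hzE)
    have hc0 : c ≠ 0 := by
      rintro rfl; rw [map_zero] at hc; exact (Units.ne_zero z) hc.symm
    exact ⟨Units.mk0 c hc0, Units.ext (by rw [hιval]; simpa using hc)⟩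
  have htr : ∀ (c : F) (y : E),
      Algebra.trace F E (algebraMap F E c * y) = c * Algebra.trace F E y := by
    intro c y
    rw [← Algebra.smul_def, map_smul, smul_eq_mul]
  -- the key pointwise formula
  have key : ∀ x₀ : Eˣ, ∃ c₀ : Fˣ, ∀ c : Fˣ,
      val (ι c * x₀) = ((c ^ e₂ : Fˣ) : F) *
        (((c ^ ((k : ℤ) * e₁ - e₂) : Fˣ) : F) * ((c₀ : F) * t)
          + Algebra.trace F E (b * ((x₀ ^ e₂ : Eˣ) : E))) := by
    intro x₀
    obtain ⟨c₀, hc₀⟩ := hdesc x₀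
    refine ⟨c₀, fun c => ?_⟩
    have hcΔ : c ^ (Δ * e₁) = c ^ ((k : ℤ) * e₁ - e₂) * c ^ e₂ := by
      have hexp : Δ * e₁ = (k : ℤ) * e₁ + ((q : ℤ) - 1) * (d * e₁) := by
        linear_combination e₁ * hd
      rw [hexp, zpow_add, zpow_mul c ((q : ℤ) - 1) (d * e₁), hFpow, one_zpow, mul_one, ← zpow_add]
      congr 1
      ring
    have h1 : (ι c * x₀) ^ (Δ * e₁) = ι (c ^ (Δ * e₁) * c₀) := by
      rw [mul_zpow, map_mul, map_zpow, hc₀]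
    have h2 : (ι c * x₀) ^ e₂ = ι (c ^ e₂) * x₀ ^ e₂ := by
      rw [mul_zpow, map_zpow]
    simp only [hvaldef]
    rw [h1, h2, Units.val_mul, hιval, hιval, map_add, mul_comm a, htr, mul_left_comm b, htr]
    rw [hcΔ]
    simp only [Units.val_mul]
    ring
  -- set-up of the quotient group `Eˣ ⧸ Fˣ`
  letI instQF : Fintype (Eˣ ⧸ ι.range) := Fintype.ofFinite _
  set ΔQ : ℕ := Fintype.card (Eˣ ⧸ ι.range) with hΔQ
  have hcardU : Nat.card ι.range = q - 1 := by
    rw [Nat.card_congr (MonoidHom.ofInjective hιinj).toEquiv.symm,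
      Nat.card_eq_fintype_card, hcardF]
  have hQrel : ΔQ * (q - 1) = q ^ k - 1 := by
    have h := Subgroup.card_eq_card_quotient_mul_card_subgroup (ι.range)
    rw [Nat.card_eq_fintype_card, hn, Nat.card_eq_fintype_card, hcardU] at h
    exact h.symm
  have hqz : ((q : ℤ) - 1) ≠ 0 := by
    have : (1 : ℤ) < (q : ℤ) := by exact_mod_cast hq
    omega
  have hQint : (ΔQ : ℤ) = Δ := by
    have h1 : (ΔQ : ℤ) * ((q : ℤ) - 1) = Δ * ((q : ℤ) - 1) := by
      rw [hΔ, hcast1, hcastk]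
      exact_mod_cast congrArg (Nat.cast : ℕ → ℤ) hQrel
    exact mul_right_cancel₀ hqz h1
  -- the two relevant counts on the quotient
  set m : ℕ := (Finset.univ.filter (fun C : Eˣ ⧸ ι.range =>
      Algebra.trace F E (b * ((((C.out : Eˣ) ^ e₂ : Eˣ)) : E)) = 0)).card with hmdef
  have hτmul0 : ∀ (c : Fˣ) (x : Eˣ),
      Algebra.trace F E (b * ((ι c * x : Eˣ) : E)) = (c : F) * Algebra.trace F E (b * (x : E)) := by
    intro c x
    rw [Units.val_mul, hιval, mul_left_comm, htr]
  -- fiberwise counting lemmas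
  have hfib1 : ∀ C : Eˣ ⧸ ι.range,
      ((Finset.univ.filter (fun x : Eˣ => val x ≠ 0)).filter
          (fun x => (QuotientGroup.mk x : Eˣ ⧸ ι.range) = C)).card
        = (Finset.univ.filter (fun c : Fˣ => val (ι c * C.out) ≠ 0)).card := by
    intro C
    rw [Finset.filter_filter]
    rw [show (Finset.univ.filter (fun x : Eˣ => val x ≠ 0 ∧ (QuotientGroup.mk x : Eˣ ⧸ ι.range) = C))
        = (Finset.univ.filter (fun x : Eˣ =>
            (QuotientGroup.mk x : Eˣ ⧸ ι.range) = QuotientGroup.mk C.out ∧ val x ≠ 0)) from by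
      apply Finset.filter_congr
      intro x _
      rw [QuotientGroup.out_eq']
      exact ⟨fun h => ⟨h.2, h.1⟩, fun h => ⟨h.2, h.1⟩⟩]
    exact aux_fiber_card ι hιinj C.out (fun x => val x ≠ 0)
  have hfib2 : ∀ C : Eˣ ⧸ ι.range,
      ((Finset.univ.filter (fun x : Eˣ => Algebra.trace F E (b * (x : E)) = 0)).filter
          (fun x => (QuotientGroup.mk x : Eˣ ⧸ ι.range) = C)).card
        = (Finset.univ.filter (fun c : Fˣ =>
            Algebra.trace F E (b * ((ι c * C.out : Eˣ) : E)) = 0)).card := by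
    intro C
    rw [Finset.filter_filter]
    rw [show (Finset.univ.filter (fun x : Eˣ =>
          Algebra.trace F E (b * (x : E)) = 0 ∧ (QuotientGroup.mk x : Eˣ ⧸ ι.range) = C))
        = (Finset.univ.filter (fun x : Eˣ =>
            (QuotientGroup.mk x : Eˣ ⧸ ι.range) = QuotientGroup.mk C.out ∧
              Algebra.trace F E (b * (x : E)) = 0)) from by
      apply Finset.filter_congr
      intro x _
      rw [QuotientGroup.out_eq']
      exact ⟨fun h => ⟨h.2, h.1⟩, fun h => ⟨h.2, h.1⟩⟩]
    exact aux_fiber_card ι hιinj C.out (fun x => Algebra.trace F E (b * (x : E)) = 0)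
  -- the count `m` satisfies `m * (q - 1) = q ^ (k - 1) - 1` when `b ≠ 0`
  have hmq : b ≠ 0 → m * (q - 1) = q ^ (k - 1) - 1 := by
    intro hb
    -- step 1 : the analogous count without the `e₂`-power
    set m' : ℕ := (Finset.univ.filter (fun C : Eˣ ⧸ ι.range =>
        Algebra.trace F E (b * ((C.out : Eˣ) : E)) = 0)).card with hm'def
    have step1 : m' * (q - 1) = q ^ (k - 1) - 1 := by
      have hM := aux_ker_card hcard hE b hb
      rw [← hM]
      rw [Finset.card_eq_sum_card_fiberwise
        (f := fun x : Eˣ => (QuotientGroup.mk x : Eˣ ⧸ ι.range)) (t := Finset.univ)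
        (fun x _ => Finset.mem_univ _)]
      have hterm : ∀ C : Eˣ ⧸ ι.range,
          ((Finset.univ.filter (fun x : Eˣ => Algebra.trace F E (b * (x : E)) = 0)).filter
              (fun x => (QuotientGroup.mk x : Eˣ ⧸ ι.range) = C)).card
            = if Algebra.trace F E (b * ((C.out : Eˣ) : E)) = 0 then q - 1 else 0 := by
        intro C
        rw [hfib2 C]
        by_cases hKC : Algebra.trace F E (b * ((C.out : Eˣ) : E)) = 0
        · rw [if_pos hKC]
          rw [Finset.filter_true_of_mem, Finset.card_univ, hcardF]
          intro c _
          rw [hτmul0, hKC, mul_zero]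
        · rw [if_neg hKC]
          rw [Finset.filter_false_of_mem, Finset.card_empty]
          intro c _
          rw [hτmul0]
          exact fun h => hKC (by
            have := mul_eq_zero.mp h
            rcases this with h' | h'
            · exact absurd h' (Units.ne_zero c)
            · exact h')
      rw [Finset.sum_congr rfl (fun C _ => hterm C)]
      rw [Finset.sum_ite, Finset.sum_const, Finset.sum_const_zero, add_zero, smul_eq_mul]
    -- step 2 : `m = m'` via the bijection `C ↦ C ^ e₂` of the quotient
    have hgcdψ : Int.gcd e₂ (Nat.card (Eˣ ⧸ ι.range)) = 1 := by
      rw [Nat.card_eq_fintype_card]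
      rw [show ((Fintype.card (Eˣ ⧸ ι.range) : ℤ)) = Δ from hQint]
      rw [Int.gcd_comm]
      exact he₂
    have hψ : Function.Bijective (fun C : Eˣ ⧸ ι.range => C ^ e₂) :=
      aux_zpow_bij e₂ hgcdψ
    have hrel : ∀ C : Eˣ ⧸ ι.range, ∃ c : Fˣ, (C ^ e₂).out = ι c * ((C.out : Eˣ) ^ e₂) := by
      intro C
      have hmk : (QuotientGroup.mk ((C ^ e₂).out) : Eˣ ⧸ ι.range)
          = QuotientGroup.mk ((C.out : Eˣ) ^ e₂) := by
        rw [QuotientGroup.out_eq', QuotientGroup.mk_zpow, QuotientGroup.out_eq']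
      rw [QuotientGroup.eq] at hmk
      obtain ⟨c, hc⟩ := hmk
      refine ⟨c⁻¹, ?_⟩
      rw [map_inv, hc, mul_inv_rev, inv_inv, mul_assoc,
        mul_comm ((C ^ e₂).out) ((C.out : Eˣ) ^ e₂), ← mul_assoc, inv_mul_cancel, one_mul]
    have hZK : ∀ C : Eˣ ⧸ ι.range,
        (Algebra.trace F E (b * (((C ^ e₂).out : Eˣ) : E)) = 0
          ↔ Algebra.trace F E (b * ((((C.out : Eˣ) ^ e₂ : Eˣ)) : E)) = 0) := by
      intro C
      obtain ⟨c, hc⟩ := hrel C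
      rw [hc, hτmul0]
      constructor
      · intro h
        rcases mul_eq_zero.mp h with h' | h'
        · exact absurd h' (Units.ne_zero c)
        · exact h'
      · intro h
        rw [h, mul_zero]
    have step2 : m = m' := by
      rw [hmdef, hm'def]
      refine Finset.card_bij (fun C _ => C ^ e₂) ?_ ?_ ?_
      · intro C hC
        simp only [Finset.mem_filter, Finset.mem_univ, true_and] at hC ⊢
        exact (hZK C).mpr hC
      · intro C₁ _ C₂ _ h
        exact hψ.1 h
      · intro D hD
        simp only [Finset.mem_filter, Finset.mem_univ, true_and] at hD
        refine ⟨(Equiv.ofBijective _ hψ).symm D, ?_, ?_⟩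
        · simp only [Finset.mem_filter, Finset.mem_univ, true_and]
          have hap : ((Equiv.ofBijective _ hψ).symm D) ^ e₂ = D :=
            (Equiv.ofBijective _ hψ).apply_symm_apply D
          exact (hZK _).mp (by rw [hap]; exact hD)
        · exact (Equiv.ofBijective _ hψ).apply_symm_apply D
    rw [step2]
    exact step1
  -- miscellaneous arithmetic facts
  have hA1 : 1 ≤ q ^ (k - 1) := Nat.one_le_pow _ _ (by omega)
  have hpk : (q : ℤ) ^ k = (q : ℤ) ^ (k - 1) * q := by
    rw [← pow_succ]
    congr 1
    omega
  refine ⟨?_, ?_, ?_, ?_⟩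
  -- Case 1 : a = 0, b = 0
  · rintro ⟨rfl, rfl⟩
    rw [hNT]
    rw [Finset.filter_false_of_mem, Finset.card_empty]
    intro x _
    simp only [hvaldef, zero_mul, add_zero, map_zero, ne_eq, not_true_eq_false,
      not_false_eq_true, not_not]
  -- Case 2 : Tr a ≠ 0, b = 0
  · rintro ⟨hta, rfl⟩
    rw [hNT]
    rw [Finset.filter_true_of_mem, Finset.card_univ, hn]
    intro x _
    obtain ⟨c₀, hkey⟩ := key x
    have h := hkey 1
    rw [map_one, one_mul] at h
    simp only [one_zpow, Units.val_one, one_mul, zero_mul, map_zero, add_zero] at h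
    rw [h]
    exact mul_ne_zero (Units.ne_zero c₀) hta
  -- Case 3 : Tr a = 0, b ≠ 0
  · rintro ⟨hta, hb⟩
    have hm1 := hmq hb
    rw [hNT, Finset.card_eq_sum_card_fiberwise
      (f := fun x : Eˣ => (QuotientGroup.mk x : Eˣ ⧸ ι.range)) (t := Finset.univ)
      (fun x _ => Finset.mem_univ _)]
    have hterm : ∀ C : Eˣ ⧸ ι.range,
        ((Finset.univ.filter (fun x : Eˣ => val x ≠ 0)).filter
          (fun x => (QuotientGroup.mk x : Eˣ ⧸ ι.range) = C)).card
        = if Algebra.trace F E (b * ((((C.out : Eˣ) ^ e₂ : Eˣ)) : E)) = 0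
            then 0 else q - 1 := by
      intro C
      rw [hfib1 C]
      obtain ⟨c₀, hkey⟩ := key C.out
      by_cases hτ : Algebra.trace F E (b * ((((C.out : Eˣ) ^ e₂ : Eˣ)) : E)) = 0
      · rw [if_pos hτ]
        rw [Finset.filter_false_of_mem, Finset.card_empty]
        intro c _
        rw [hkey c, hτ, hta, mul_zero, mul_zero, add_zero, mul_zero]
        simp
      · rw [if_neg hτ]
        rw [Finset.filter_true_of_mem, Finset.card_univ, hcardF]
        intro c _
        rw [hkey c, hta, mul_zero, mul_zero, zero_add]
        exact mul_ne_zero (Units.ne_zero _) hτ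
    rw [Finset.sum_congr rfl (fun C _ => hterm C), Finset.sum_ite, Finset.sum_const,
      Finset.sum_const, smul_zero, zero_add, smul_eq_mul]
    set m2 : ℕ := (Finset.univ.filter (fun C : Eˣ ⧸ ι.range =>
        ¬ Algebra.trace F E (b * ((((C.out : Eˣ) ^ e₂ : Eˣ)) : E)) = 0)).card with hm2def
    have hmm2 : m + m2 = ΔQ := by
      rw [hmdef, hm2def, hΔQ, ← Finset.card_univ]
      exact Finset.card_filter_add_card_filter_not _
    -- pass to the integers
    have hm1' : (m : ℤ) * ((q : ℤ) - 1) = (q : ℤ) ^ (k - 1) - 1 := by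
      zify [hq.le, hA1] at hm1
      exact hm1
    have hQ'' : ((m : ℤ) + (m2 : ℤ)) * ((q : ℤ) - 1) = (q : ℤ) ^ (k - 1) * q - 1 := by
      have h := hQrel
      zify [hq.le, hqk.le] at h
      rw [show ((ΔQ : ℤ)) = (m : ℤ) + (m2 : ℤ) from by exact_mod_cast hmm2.symm] at h
      rw [h, ← hpk]
    zify [hq.le]
    linear_combination hQ'' - hm1'
  -- Case 4 : Tr a ≠ 0, b ≠ 0
  · rintro ⟨hta, hb⟩
    have hm1 := hmq hb
    have hgcdκ : Int.gcd ((k : ℤ) * e₁ - e₂) (Nat.card Fˣ) = 1 := by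
      rw [Nat.card_eq_fintype_card, hcardF, ← hcast1, Int.gcd_comm]
      exact hgcd
    have hσ : Function.Bijective (fun c : Fˣ => c ^ ((k : ℤ) * e₁ - e₂)) :=
      aux_zpow_bij _ hgcdκ
    rw [hNT, Finset.card_eq_sum_card_fiberwise
      (f := fun x : Eˣ => (QuotientGroup.mk x : Eˣ ⧸ ι.range)) (t := Finset.univ)
      (fun x _ => Finset.mem_univ _)]
    have hterm : ∀ C : Eˣ ⧸ ι.range,
        ((Finset.univ.filter (fun x : Eˣ => val x ≠ 0)).filter
          (fun x => (QuotientGroup.mk x : Eˣ ⧸ ι.range) = C)).card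
        = if Algebra.trace F E (b * ((((C.out : Eˣ) ^ e₂ : Eˣ)) : E)) = 0
            then q - 1 else q - 2 := by
      intro C
      rw [hfib1 C]
      obtain ⟨c₀, hkey⟩ := key C.out
      have hc₀t : (c₀ : F) * t ≠ 0 := mul_ne_zero (Units.ne_zero c₀) hta
      by_cases hτ : Algebra.trace F E (b * ((((C.out : Eˣ) ^ e₂ : Eˣ)) : E)) = 0
      · rw [if_pos hτ]
        rw [Finset.filter_true_of_mem, Finset.card_univ, hcardF]
        intro c _
        rw [hkey c, hτ, add_zero]
        exact mul_ne_zero (Units.ne_zero _) (mul_ne_zero (Units.ne_zero _) hc₀t)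
      · rw [if_neg hτ]
        set τC := Algebra.trace F E (b * ((((C.out : Eˣ) ^ e₂ : Eˣ)) : E)) with hτC
        have hw : -τC * (((c₀ : F) * t))⁻¹ ≠ 0 :=
          mul_ne_zero (neg_ne_zero.2 hτ) (inv_ne_zero hc₀t)
        set W : Fˣ := Units.mk0 _ hw with hW
        have hiff : ∀ c : Fˣ, val (ι c * C.out) = 0 ↔ c ^ ((k : ℤ) * e₁ - e₂) = W := by
          intro c
          rw [hkey c]
          constructor
          · intro h
            rcases mul_eq_zero.mp h with h' | h'
            · exact absurd h' (Units.ne_zero _)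
            · have h2 : ((c ^ ((k : ℤ) * e₁ - e₂) : Fˣ) : F) * ((c₀ : F) * t) = -τC :=
                eq_neg_of_add_eq_zero_left h'
              apply Units.ext
              rw [hW, Units.val_mk0, eq_mul_inv_iff_mul_eq₀ hc₀t, h2]
          · intro h
            rw [h, hW, Units.val_mk0, mul_assoc, inv_mul_cancel₀ hc₀t, mul_one,
              neg_add_cancel, mul_zero]
        have hfiltereq : (Finset.univ.filter (fun c : Fˣ => val (ι c * C.out) = 0))
            = Finset.univ.filter (fun c : Fˣ => c ^ ((k : ℤ) * e₁ - e₂) = W) :=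
          Finset.filter_congr (fun c _ => by rw [hiff c])
        have hone : (Finset.univ.filter (fun c : Fˣ => val (ι c * C.out) = 0)).card = 1 := by
          rw [hfiltereq]
          have hsingle : Finset.univ.filter (fun c : Fˣ => c ^ ((k : ℤ) * e₁ - e₂) = W)
              = {(Equiv.ofBijective _ hσ).symm W} := by
            ext c
            simp only [Finset.mem_filter, Finset.mem_univ, true_and, Finset.mem_singleton]
            constructor
            · intro h
              have h2 : (Equiv.ofBijective _ hσ) c = W := h
              rw [← h2, Equiv.symm_apply_apply]
            · rintro rfl
              exact (Equiv.ofBijective _ hσ).apply_symm_apply W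
          rw [hsingle, Finset.card_singleton]
        have hsplit := Finset.card_filter_add_card_filter_not
          (s := (Finset.univ : Finset Fˣ)) (p := fun c : Fˣ => val (ι c * C.out) = 0)
        rw [hone, Finset.card_univ, hcardF] at hsplit
        have hQ2 : (Finset.univ.filter (fun c : Fˣ => ¬ val (ι c * C.out) = 0)).card
            = q - 2 := by omega
        simpa only [ne_eq] using hQ2
    rw [Finset.sum_congr rfl (fun C _ => hterm C), Finset.sum_ite, Finset.sum_const,
      Finset.sum_const, smul_eq_mul, smul_eq_mul, ← hmdef]
    set m2 : ℕ := (Finset.univ.filter (fun C : Eˣ ⧸ ι.range =>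
        ¬ Algebra.trace F E (b * ((((C.out : Eˣ) ^ e₂ : Eˣ)) : E)) = 0)).card with hm2def
    have hmm2 : m + m2 = ΔQ := by
      rw [hmdef, hm2def, hΔQ, ← Finset.card_univ]
      exact Finset.card_filter_add_card_filter_not _
    have hm1' : (m : ℤ) * ((q : ℤ) - 1) = (q : ℤ) ^ (k - 1) - 1 := by
      zify [hq.le, hA1] at hm1
      exact hm1
    have hQ'' : ((m : ℤ) + (m2 : ℤ)) * ((q : ℤ) - 1) = (q : ℤ) ^ (k - 1) * q - 1 := by
      have h := hQrel
      zify [hq.le, hqk.le] at h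
      rw [show ((ΔQ : ℤ)) = (m : ℤ) + (m2 : ℤ) from by exact_mod_cast hmm2.symm] at h
      rw [h, ← hpk]
    have hAq1 : 1 ≤ q ^ (k - 1) * (q - 1) :=
      Nat.one_le_iff_ne_zero.2 (Nat.mul_ne_zero (by omega) (by omega))
    zify [hq.le, (by omega : 2 ≤ q), hAq1]
    have h5 : ((q : ℤ) - 1) * ((m : ℤ) * ((q : ℤ) - 1) + (m2 : ℤ) * ((q : ℤ) - 2))
        = ((q : ℤ) - 1) * ((q : ℤ) ^ (k - 1) * ((q : ℤ) - 1) - 1) := by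
      linear_combination hm1' + ((q : ℤ) - 2) * hQ''
    exact mul_left_cancel₀ hqz h5
end

section
/- Let q be a prime power, k > 1, Δ = (q^k − 1)/(q − 1), γ a primitive element of F_{q^k}, and let e₁, e₂ be integers with gcd(q − 1, k·e₁ − e₂) = 1 and gcd(Δ, e₂) = 1. For a, b ∈ F_{q^k} let c(a, b) ∈ (Fin (q^k − 1) → F_q) be the vector with i-th entry Tr(a·γ^{Δe₁·i} + b·γ^{e₂·i}), and let C = { c(a, b) : a, b ∈ F_{q^k} }. Then C has exactly q^{k+1} elements, and its Hamming-weight distribution is: exactly 1 element of weight 0, exactly (q − 1)(q^k − 1) elements of weight q^{k−1}(q − 1) − 1, exactly q^k − 1 elements of weight q^{k−1}(q − 1), exactly q − 1 elements of weight q^k − 1, and no elements of any other weight. -/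
/-!
Put `β = N(γ) = γ ^ Δ ∈ Fˣ` and `f = e₂ - Δ e₁`. By `F`-linearity of the trace, the `i`-th
coordinate of `c(a, b)` is `β ^ (e₁ i) * (Tr a + Tr (b γ ^ (f i)))`. The first factor never
vanishes, and `i ↦ γ ^ (f i)` enumerates `Eˣ` because `f` is prime to `q ^ k - 1` (as
`Δ ≡ k mod q - 1`). So, with `s = Tr a`, the weight of `c(a, b)` is the number of `x ∈ Eˣ` with
`s + Tr (b x) ≠ 0`; since every fibre of the trace has `q ^ (k - 1)` elements, this depends only on
which of `s`, `b` vanish. For `k > 1` the four values are distinct, which makes `(s, b) ↦ c`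
injective, and the distribution is a count of pairs `(s, b)`.
-/

open Finset Function

section Hamming

variable {ι κ M : Type*} [Fintype ι] [Fintype κ] [Zero M] [DecidableEq M]

theorem hammingNorm_comp_bijective (x : κ → M) {f : ι → κ} (hf : Bijective f) :
    hammingNorm (fun i => x (f i)) = hammingNorm x :=
  card_equiv (Equiv.ofBijective f hf) (by simp)

theorem hammingNorm_units_val_add {M₀ : Type*} [GroupWithZero M₀] [Fintype M₀] [DecidableEq M₀]
    (g : M₀ → M) :
    hammingNorm (fun u : M₀ˣ => g u) + (if g 0 = 0 then 0 else 1) = hammingNorm g := by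
  have hval : (univ.filter fun u : M₀ˣ => g u ≠ 0).map ⟨Units.val, Units.val_injective⟩ =
      (univ.filter fun y => g y ≠ 0).erase 0 := by
    ext y
    simp only [mem_map, mem_filter, mem_univ, true_and, mem_erase, Embedding.coeFn_mk]
    exact ⟨by rintro ⟨u, hu, rfl⟩; exact ⟨u.ne_zero, hu⟩,
      fun ⟨hy, hgy⟩ => ⟨Units.mk0 y hy, hgy, rfl⟩⟩
  unfold hammingNorm
  rw [← card_map, hval, card_erase_eq_ite]
  by_cases h0 : g 0 = 0
  · simp [h0]
  · have hmem : (0 : M₀) ∈ univ.filter fun y => g y ≠ 0 := by simpa using h0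
    rw [if_pos hmem, if_neg h0, Nat.sub_add_cancel (card_pos.2 ⟨0, hmem⟩)]

end Hamming

theorem ncard_setOf_mem_range_hammingNorm_eq {α β ι K : Type*} [Fintype ι] [Zero K]
    [DecidableEq K] {W : α × β → ι → K} (hW : Injective W)
    {v : ℕ} {S : Set α} {T : Set β}
    (hST : ∀ a b, hammingNorm (W (a, b)) = v ↔ a ∈ S ∧ b ∈ T) :
    {c ∈ Set.range W | hammingNorm c = v}.ncard = S.ncard * T.ncard := by
  have himage : {c ∈ Set.range W | hammingNorm c = v} = W '' (S ×ˢ T) := by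
    ext c
    constructor
    · rintro ⟨⟨⟨a, b⟩, rfl⟩, hc⟩
      exact ⟨(a, b), (hST a b).1 hc, rfl⟩
    · rintro ⟨⟨a, b⟩, hab, rfl⟩
      exact ⟨⟨(a, b), rfl⟩, (hST a b).2 hab⟩
  rw [himage, Set.ncard_image_of_injective _ hW, Set.ncard_prod]

theorem weight_distribution_of_hammingNorm_eq {α β ι K : Type*} [AddGroup α] [AddGroup β]
    [Finite α] [Finite β] [DecidableEq α] [DecidableEq β] [Fintype ι] [AddGroup K] [DecidableEq K]
    (W : α × β →+ (ι → K)) {wa wb wab : ℕ}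
    (hw : [0, wab, wb, wa].Nodup)
    (hW : ∀ a b, hammingNorm (W (a, b)) =
      if a = 0 then (if b = 0 then 0 else wb) else if b = 0 then wa else wab) :
    Nat.card (Set.range W) = Nat.card α * Nat.card β ∧
    {c ∈ Set.range W | hammingNorm c = 0}.ncard = 1 ∧
    {c ∈ Set.range W | hammingNorm c = wab}.ncard = (Nat.card α - 1) * (Nat.card β - 1) ∧
    {c ∈ Set.range W | hammingNorm c = wb}.ncard = Nat.card β - 1 ∧
    {c ∈ Set.range W | hammingNorm c = wa}.ncard = Nat.card α - 1 ∧
    ∀ c ∈ Set.range W, hammingNorm c ∈ ({0, wab, wb, wa} : Set ℕ) := by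
  simp only [List.nodup_cons, List.mem_cons, List.not_mem_nil, List.nodup_nil, or_false, not_or,
    not_false_eq_true, and_true] at hw
  have hinj : Injective W := (injective_iff_map_eq_zero W).2 fun ⟨a, b⟩ h => by
    have h0 := hW a b
    rw [h, hammingNorm_zero] at h0
    split_ifs at h0 with ha hb hb
    · simp [ha, hb]
    all_goals omega
  have hcount {v : ℕ} {S : Set α} {T : Set β} :=
    ncard_setOf_mem_range_hammingNorm_eq hinj (v := v) (S := S) (T := T)
  have hzero : ({0}ᶜ : Set α).ncard = Nat.card α - 1 := by
    rw [Set.ncard_compl, Set.ncard_singleton]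
  have hzero' : ({0}ᶜ : Set β).ncard = Nat.card β - 1 := by
    rw [Set.ncard_compl, Set.ncard_singleton]
  refine ⟨Nat.card_range_of_injective hinj |>.trans (Nat.card_prod α β), ?_, ?_, ?_, ?_, ?_⟩
  · rw [hcount (S := {0}) (T := {0}) fun a b => by rw [hW]; split_ifs <;> simp_all [eq_comm]]
    simp
  · rw [hcount (S := {0}ᶜ) (T := {0}ᶜ) fun a b => by rw [hW]; split_ifs <;> simp_all [eq_comm],
      hzero, hzero']
  · rw [hcount (S := {0}) (T := {0}ᶜ) fun a b => by rw [hW]; split_ifs <;> simp_all [eq_comm],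
      hzero', Set.ncard_singleton, one_mul]
  · rw [hcount (S := {0}ᶜ) (T := {0}) fun a b => by rw [hW]; split_ifs <;> simp_all [eq_comm],
      hzero, Set.ncard_singleton, mul_one]
  · rintro c ⟨⟨a, b⟩, rfl⟩
    rw [hW]
    split_ifs <;> simp

theorem Int.modEq_of_mul_sub_one_eq_pow_sub_one {q Δ : ℤ} {k : ℕ} (hq : q ≠ 1)
    (hΔ : Δ * (q - 1) = q ^ k - 1) : Δ ≡ k [ZMOD q - 1] := by
  have hgeom : Δ = ∑ j ∈ Finset.range k, q ^ j :=
    mul_right_cancel₀ (sub_ne_zero.2 hq) (by rw [hΔ, geom_sum_mul])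
  have hq1 : q ≡ 1 [ZMOD q - 1] := Int.modEq_sub q 1
  calc Δ = ∑ j ∈ Finset.range k, q ^ j := hgeom
    _ ≡ ∑ j ∈ Finset.range k, 1 ^ j [ZMOD q - 1] := Int.ModEq.sum fun j _ => hq1.pow j
    _ = k := by simp

theorem isCoprime_pow_sub_one_sub_mul {q Δ e₁ e₂ : ℤ} {k : ℕ} (hq : q ≠ 1)
    (hΔ : Δ * (q - 1) = q ^ k - 1) (hgcd : Int.gcd (q - 1) (k * e₁ - e₂) = 1)
    (he₂ : Int.gcd Δ e₂ = 1) : IsCoprime (q ^ k - 1) (e₂ - Δ * e₁) := by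
  rw [← hΔ]
  refine IsCoprime.mul_left ?_ ?_
  · have := (Int.isCoprime_iff_gcd_eq_one.2 he₂).add_mul_left_right (-e₁)
    rwa [mul_neg, ← sub_eq_add_neg] at this
  · obtain ⟨m, hm⟩ := (Int.modEq_of_mul_sub_one_eq_pow_sub_one hq hΔ).symm.dvd
    have hf : e₂ - Δ * e₁ = -(k * e₁ - e₂) + (q - 1) * -(m * e₁) := by
      linear_combination (-e₁) * hm
    rw [hf]
    exact (Int.isCoprime_iff_gcd_eq_one.2 hgcd).neg_right.add_mul_left_right _

theorem bijective_zpow_mul_of_isCoprime {G : Type*} [Group G] [Finite G] {γ : G}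
    (hγ : ∀ x, x ∈ Subgroup.zpowers γ) {n : ℕ} (hn : Nat.card G = n) {f : ℤ}
    (hf : IsCoprime (n : ℤ) f) : Bijective fun i : Fin n => γ ^ (f * i) := by
  have := Fintype.ofFinite G
  have hord : orderOf γ = n := by rw [← hn]; exact orderOf_eq_card_of_forall_mem_zpowers hγ
  refine (Fintype.bijective_iff_injective_and_card _).2 ⟨fun i j hij => ?_, by simp [← hn]⟩
  rw [zpow_eq_zpow_iff_modEq, hord, Int.modEq_iff_dvd, ← mul_sub] at hij
  have hdvd : (n : ℤ) ∣ j - i := hf.dvd_of_dvd_mul_left hij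
  exact Fin.ext (Nat.ModEq.eq_of_lt_of_lt (Int.natCast_modEq_iff.1 (Int.modEq_iff_dvd.2 hdvd))
    i.isLt j.isLt)

theorem Nat.pow_sub_pow_div_self {q k : ℕ} (hq : 0 < q) (hk : k ≠ 0) :
    q ^ k - q ^ k / q = q ^ (k - 1) * (q - 1) := by
  obtain ⟨k, rfl⟩ := Nat.exists_eq_succ_of_ne_zero hk
  rw [Nat.succ_sub_one, pow_succ, Nat.mul_div_cancel _ hq, Nat.mul_sub_one]

theorem nodup_weights {q k : ℕ} (hq : 2 ≤ q) (hk : 1 < k) :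
    [0, q ^ (k - 1) * (q - 1) - 1, q ^ (k - 1) * (q - 1), q ^ k - 1].Nodup := by
  have hP : 2 ≤ q ^ (k - 1) := hq.trans (Nat.le_self_pow (by omega) q)
  have hA : 2 ≤ q ^ (k - 1) * (q - 1) := hP.trans (Nat.le_mul_of_pos_right _ (by omega))
  have hQ : q ^ (k - 1) * (q - 1) + q ^ (k - 1) = q ^ k := by
    rw [← Nat.mul_succ, Nat.succ_eq_add_one, Nat.sub_add_cancel (by omega), ← pow_succ,
      Nat.sub_add_cancel (by omega)]
  simp only [List.nodup_cons, List.mem_cons, List.not_mem_nil, List.nodup_nil, or_false, not_or,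
    not_false_eq_true, and_true]
  omega

section Trace

variable {F E : Type*} [Field F] [Fintype F] [DecidableEq F] [Field E] [Fintype E] [Algebra F E]

theorem card_filter_trace_eq (t : F) :
    #{y : E | Algebra.trace F E y = t} = Fintype.card E / Fintype.card F := by
  have hsurj := Algebra.trace_surjective F E
  have hfiber (t' : F) :
      #{y : E | Algebra.trace F E y = t'} = #{y : E | Algebra.trace F E y = t} :=
    AddMonoidHom.card_fiber_eq_of_mem_range (Algebra.trace F E) (hsurj t') (hsurj t)
  have hsum := card_eq_sum_card_fiberwise (f := Algebra.trace F E) (s := univ) (t := univ)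
    fun _ _ => mem_univ _
  rw [sum_congr rfl fun t' _ => hfiber t', sum_const, card_univ, card_univ, smul_eq_mul] at hsum
  rw [hsum, Nat.mul_div_cancel_left _ Fintype.card_pos]

theorem hammingNorm_add_trace (s : F) :
    hammingNorm (fun y : E => s + Algebra.trace F E y) =
      Fintype.card E - Fintype.card E / Fintype.card F := by
  have hsplit := card_filter_add_card_filter_not (s := univ)
    (fun y : E => Algebra.trace F E y = -s)
  rw [card_filter_trace_eq, card_univ] at hsplit
  have hnorm : hammingNorm (fun y : E => s + Algebra.trace F E y) =
      #{y : E | ¬Algebra.trace F E y = -s} := by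
    simp only [hammingNorm, ne_eq, add_eq_zero_iff_neg_eq, eq_comm (a := -s)]
  omega

theorem hammingNorm_add_trace_mul [DecidableEq E] (s : F) (b : E) :
    hammingNorm (fun x : Eˣ => s + Algebra.trace F E (b * x)) =
      if s = 0 then (if b = 0 then 0 else Fintype.card E - Fintype.card E / Fintype.card F)
      else if b = 0 then Fintype.card E - 1
      else Fintype.card E - Fintype.card E / Fintype.card F - 1 := by
  rcases eq_or_ne b 0 with rfl | hb
  · by_cases hs : s = 0 <;> simp [hs, hammingNorm, Fintype.card_units]
  · have hmul : hammingNorm (fun x : Eˣ => s + Algebra.trace F E (b * x)) =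
        hammingNorm (fun y : Eˣ => s + Algebra.trace F E y) :=
      hammingNorm_comp_bijective (fun y : Eˣ => s + Algebra.trace F E y)
        (f := (Units.mk0 b hb * ·)) (Group.mulLeft_bijective _)
    have hunits := hammingNorm_units_val_add (fun y : E => s + Algebra.trace F E y)
    rw [hammingNorm_add_trace] at hunits
    simp only [map_zero, add_zero] at hunits
    rw [hmul, if_neg hb, if_neg hb]
    split_ifs at hunits ⊢ <;> omega

theorem hammingNorm_add_trace_mul_of_card_eq [DecidableEq E] {q k : ℕ} (hk : k ≠ 0)
    (hcard : Fintype.card F = q) (hE : Fintype.card E = q ^ k) (s : F) (b : E) :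
    hammingNorm (fun x : Eˣ => s + Algebra.trace F E (b * x)) =
      if s = 0 then (if b = 0 then 0 else q ^ (k - 1) * (q - 1))
      else if b = 0 then q ^ k - 1
      else q ^ (k - 1) * (q - 1) - 1 := by
  rw [hammingNorm_add_trace_mul, hcard, hE,
    Nat.pow_sub_pow_div_self (hcard ▸ Fintype.card_pos) hk]

end Trace

theorem Algebra.trace_mul_algebraMap {R S : Type*} [CommRing R] [CommRing S] [Algebra R S]
    (x : S) (c : R) : Algebra.trace R S (x * algebraMap R S c) = c * Algebra.trace R S x := by
  rw [mul_comm, ← Algebra.smul_def, map_smul, smul_eq_mul]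

section TraceCode

variable {F E : Type*} [Field F] [Field E] [Algebra F E]

theorem algebraMap_norm_eq_zpow [Fintype F] [Fintype E] {Δ : ℤ}
    (hΔ : Δ * ((Fintype.card F : ℤ) - 1) = (Fintype.card E : ℤ) - 1) (x : Eˣ) :
    algebraMap F E (Algebra.norm F (x : E)) = ((x ^ Δ : Eˣ) : E) := by
  have hF : 1 < Fintype.card F := Fintype.one_lt_card
  have hE : 1 ≤ Fintype.card E := Fintype.card_pos
  have hΔnat : Δ = ((Nat.card E - 1) / (Nat.card F - 1) : ℕ) := by
    rw [Nat.card_eq_fintype_card, Nat.card_eq_fintype_card, Int.natCast_div,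
      Nat.cast_sub hE, Nat.cast_sub hF.le, Nat.cast_one, ← hΔ,
      Int.mul_ediv_cancel _ (by omega)]
  rw [FiniteField.algebraMap_norm_eq_pow, hΔnat, zpow_natCast, Units.val_pow_eq_pow_val]

noncomputable def traceCode {ι : Type*} (u : ι → Fˣ) (v : ι → Eˣ) : F × E →+ (ι → F) where
  toFun p i := u i * (p.1 + Algebra.trace F E (p.2 * v i))
  map_zero' := by ext; simp
  map_add' p p' := by
    ext
    simp only [Prod.fst_add, Prod.snd_add, add_mul, map_add, Pi.add_apply]
    ring

theorem range_traceCode [Finite E] {ι : Type*} (u : ι → Fˣ) (v : ι → Eˣ) :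
    Set.range (traceCode u v) = {c | ∃ a b : E, c = fun i =>
      Algebra.trace F E (a * algebraMap F E (u i) + b * (v i * algebraMap F E (u i)))} := by
  have hcode (a b : E) : (fun i => Algebra.trace F E
      (a * algebraMap F E (u i) + b * (v i * algebraMap F E (u i)))) =
      traceCode u v (Algebra.trace F E a, b) := by
    ext i
    simp only [traceCode, AddMonoidHom.coe_mk, ZeroHom.coe_mk, ← mul_assoc, map_add,
      Algebra.trace_mul_algebraMap, mul_add]
  ext c
  constructor
  · rintro ⟨⟨s, b⟩, rfl⟩
    obtain ⟨a, rfl⟩ := Algebra.trace_surjective F E s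
    exact ⟨a, b, (hcode a b).symm⟩
  · rintro ⟨a, b, rfl⟩
    exact ⟨_, (hcode a b).symm⟩

theorem setOf_trace_zpow_eq_range_traceCode [Finite E] {n : ℕ} {γ : Eˣ} {β : Fˣ} {Δ : ℤ}
    (hβ : algebraMap F E β = ((γ ^ Δ : Eˣ) : E)) (e₁ e₂ : ℤ) :
    {c : Fin n → F | ∃ a b : E, c = fun i : Fin n => Algebra.trace F E
      (a * ((γ ^ (Δ * e₁ * (i : ℤ)) : Eˣ) : E) + b * ((γ ^ (e₂ * (i : ℤ)) : Eˣ) : E))} =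
    Set.range (traceCode (fun i : Fin n => β ^ (e₁ * i)) fun i => γ ^ ((e₂ - Δ * e₁) * i)) := by
  have hβpow (m : ℤ) : algebraMap F E ((β ^ m : Fˣ) : F) = ((γ ^ (Δ * m) : Eˣ) : E) := by
    rw [zpow_mul, Units.val_zpow_eq_zpow_val, Units.val_zpow_eq_zpow_val, map_zpow₀, hβ]
  have h₁ (m : ℤ) :
      ((γ ^ (Δ * e₁ * m) : Eˣ) : E) = algebraMap F E ((β ^ (e₁ * m) : Fˣ) : F) := by
    rw [hβpow, mul_assoc]
  have h₂ (m : ℤ) : ((γ ^ (e₂ * m) : Eˣ) : E) =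
      ((γ ^ ((e₂ - Δ * e₁) * m) : Eˣ) : E) * algebraMap F E ((β ^ (e₁ * m) : Fˣ) : F) := by
    rw [hβpow, ← Units.val_mul, ← zpow_add]
    congr 2
    ring
  simp only [h₁, h₂]
  rw [range_traceCode]

theorem hammingNorm_traceCode [DecidableEq F] [Fintype E] [DecidableEq E] {ι : Type*} [Fintype ι]
    (u : ι → Fˣ) {v : ι → Eˣ} (hv : Bijective v) (s : F) (b : E) :
    hammingNorm (traceCode u v (s, b)) =
      hammingNorm (fun x : Eˣ => s + Algebra.trace F E (b * x)) := by
  rw [← hammingNorm_comp_bijective _ hv]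
  exact hammingNorm_comp (fun i y => (u i : F) * y) (fun i => mul_right_injective₀ (u i).ne_zero)
    (fun i => mul_zero _)

end TraceCode

/-- The code `C = C_{(Δe₁, e₂)}` (realized via Delsarte's theorem as trace codewords)
has exactly `q^{k+1}` elements and the weight distribution of Table I of the paper. -/
theorem code_weight_distribution
    (q k : ℕ) (hk : 1 < k)
    (F E : Type*) [Field F] [Fintype F] [DecidableEq F] [Field E] [Fintype E] [Algebra F E]
    (hcard : Fintype.card F = q) (hE : Fintype.card E = q ^ k)
    (γ : Eˣ) (hγ : ∀ x : Eˣ, x ∈ Subgroup.zpowers γ)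
    (Δ e₁ e₂ : ℤ) (hΔ : Δ * ((q : ℤ) - 1) = (q : ℤ) ^ k - 1)
    (hgcd : Int.gcd ((q : ℤ) - 1) ((k : ℤ) * e₁ - e₂) = 1)
    (he₂ : Int.gcd Δ e₂ = 1)
    (C : Set (Fin (q ^ k - 1) → F))
    (hC : C = {c : Fin (q ^ k - 1) → F | ∃ a b : E,
      c = fun i : Fin (q ^ k - 1) => Algebra.trace F E
        (a * ((γ ^ (Δ * e₁ * (i : ℤ)) : Eˣ) : E) + b * ((γ ^ (e₂ * (i : ℤ)) : Eˣ) : E))}) :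
    Nat.card C = q ^ (k + 1) ∧
    {c ∈ C | hammingNorm c = 0}.ncard = 1 ∧
    {c ∈ C | hammingNorm c = q ^ (k - 1) * (q - 1) - 1}.ncard = (q - 1) * (q ^ k - 1) ∧
    {c ∈ C | hammingNorm c = q ^ (k - 1) * (q - 1)}.ncard = q ^ k - 1 ∧
    {c ∈ C | hammingNorm c = q ^ k - 1}.ncard = q - 1 ∧
    (∀ c ∈ C, hammingNorm c ∈
      ({0, q ^ (k - 1) * (q - 1) - 1, q ^ (k - 1) * (q - 1), q ^ k - 1} : Set ℕ)) := by
  classical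
  have hq : 2 ≤ q := hcard ▸ Fintype.one_lt_card
  have hbij : Bijective fun i : Fin (q ^ k - 1) => γ ^ ((e₂ - Δ * e₁) * i) := by
    refine bijective_zpow_mul_of_isCoprime hγ
      (by rw [Nat.card_units, Nat.card_eq_fintype_card, hE]) ?_
    push_cast [Nat.one_le_pow k q (by omega)]
    exact isCoprime_pow_sub_one_sub_mul (by exact_mod_cast (by omega : q ≠ 1)) hΔ hgcd he₂
  have hβ := algebraMap_norm_eq_zpow (F := F) (by rw [hcard, hE]; push_cast; exact hΔ) γ
  rw [hC, setOf_trace_zpow_eq_range_traceCode (β := Units.map (Algebra.norm F : E →* F) γ) hβ]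
  obtain ⟨hcardC, h0, hwab, hwb, hwa, hmem⟩ :=
    weight_distribution_of_hammingNorm_eq _ (nodup_weights hq hk) fun s b =>
      (hammingNorm_traceCode _ hbij s b).trans
        (hammingNorm_add_trace_mul_of_card_eq (by omega) hcard hE s b)
  simp only [Nat.card_eq_fintype_card (α := F), Nat.card_eq_fintype_card (α := E), hcard, hE]
    at hcardC hwab hwb hwa
  exact ⟨hcardC.trans (pow_succ' q k).symm, h0, hwab, hwb, hwa, hmem⟩
end
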